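/- arXiv:1908.07485 — 5 statements merged into one kernel-verified Lean document; each statement's English description precedes it below -/
import Mathlib

section
/- Let b, λ, ε > 0, m ≥ 0 and χ > |1-m|. Define U(x) = (λ²(χ+1-m)²)/(2ε(χ+m+1)b^{1-m}) · (1 + (λ(χ+m-1)(χ+1-m))/(2ε(χ+m+1)b^{1-m}) x)^{-2χ/(χ+m-1)} and W(x) = b(1 + (λ(χ+m-1)(χ+1-m))/(2ε(χ+m+1)b^{1-m}) x)^{-2/(χ+m-1)} on [0,∞). Then ε W''(x) = U(x) W(x)^m for all x ≥ 0. -/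
/-! On the half line `1 + c x` stays positive, so `W = b (1 + c x)^p` is smooth there with
`W'' = b c² p (p - 1) (1 + c x)^(p - 2)`. The exponents are chosen so that `U W^m` is a multiple of
the same power `(1 + c x)^(p - 2)`, and the constant `c` so that the two coefficients agree. -/

open Topology

theorem hasDerivAt_affine_rpow_const {a c p x : ℝ} (hx : 0 < a + c * x) :
    HasDerivAt (fun y => (a + c * y) ^ p) (c * p * (a + c * x) ^ (p - 1)) x := by
  have haff : HasDerivAt (fun y => a + c * y) c x := by
    simpa using ((hasDerivAt_id x).const_mul c).const_add a
  convert haff.rpow_const (p := p) (Or.inl hx.ne') using 1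

theorem deriv_deriv_affine_rpow_const {a c p x : ℝ} (hx : 0 < a + c * x) :
    deriv (deriv fun y => (a + c * y) ^ p) x = c ^ 2 * p * (p - 1) * (a + c * x) ^ (p - 2) := by
  have hpos : ∀ᶠ y in 𝓝 x, 0 < a + c * y :=
    continuousAt_const.eventually_lt (by fun_prop) hx
  have hderiv :
      deriv (fun y => (a + c * y) ^ p) =ᶠ[𝓝 x] fun y => c * p * (a + c * y) ^ (p - 1) :=
    hpos.mono fun y hy => (hasDerivAt_affine_rpow_const hy).deriv
  rw [hderiv.deriv_eq, ((hasDerivAt_affine_rpow_const (p := p - 1) hx).const_mul (c * p)).deriv]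
  ring_nf

theorem rpow_mul_mul_rpow_rpow {v b : ℝ} (hv : 0 < v) (hb : 0 ≤ b) (q p m : ℝ) :
    v ^ q * (b * v ^ p) ^ m = b ^ m * v ^ (q + p * m) := by
  rw [Real.mul_rpow hb (Real.rpow_nonneg hv.le _), ← Real.rpow_mul hv.le, Real.rpow_add hv]
  ring

theorem steady_state_equation_general
    (b lam eps m chi : ℝ) (hb : 0 < b) (hlam : 0 < lam) (heps : 0 < eps)
    (hchi : |1 - m| < chi)
    (U W : ℝ → ℝ)
    (hU : U = fun x =>
      (lam ^ 2 * (chi + 1 - m) ^ 2) / (2 * eps * (chi + m + 1) * b ^ (1 - m)) *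
        (1 + (lam * (chi + m - 1) * (chi + 1 - m)) /
          (2 * eps * (chi + m + 1) * b ^ (1 - m)) * x) ^ (-(2 * chi) / (chi + m - 1)))
    (hW : W = fun x =>
      b * (1 + (lam * (chi + m - 1) * (chi + 1 - m)) /
        (2 * eps * (chi + m + 1) * b ^ (1 - m)) * x) ^ (-2 / (chi + m - 1))) :
    ∀ x : ℝ, 0 ≤ x → eps * deriv (deriv W) x = U x * (W x) ^ m := by
  intro x hx
  obtain ⟨hchi₁, hchi₂⟩ := abs_lt.mp hchi
  have hs : 0 < chi + m - 1 := by linarith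
  have ht : 0 < chi + 1 - m := by linarith
  have hr : 0 < chi + m + 1 := by linarith
  have hbm : b ^ m * b ^ (1 - m) = b := by rw [← Real.rpow_add hb]; norm_num
  set B := b ^ (1 - m)
  set c := lam * (chi + m - 1) * (chi + 1 - m) / (2 * eps * (chi + m + 1) * B)
  set p := -2 / (chi + m - 1)
  have hB : 0 < B := Real.rpow_pos_of_pos hb _
  have hc : 0 ≤ c := by positivity
  have hv : 0 < 1 + c * x := by positivity
  have hexp : -(2 * chi) / (chi + m - 1) + p * m = p - 2 := by
    simp only [p]
    field_simp
    ring
  have hrhs : U x * W x ^ m = lam ^ 2 * (chi + 1 - m) ^ 2 / (2 * eps * (chi + m + 1) * B) *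
      b ^ m * (1 + c * x) ^ (p - 2) := by
    rw [hU, hW, mul_assoc, rpow_mul_mul_rpow_rpow hv hb.le, hexp]
    ring
  have hcoef : eps * (b * (c ^ 2 * p * (p - 1)))
      = lam ^ 2 * (chi + 1 - m) ^ 2 / (2 * eps * (chi + m + 1) * B) * b ^ m := by
    simp only [c, p]
    field_simp
    linear_combination (-(chi + m + 1)) * hbm
  rw [hrhs, hW, deriv_const_mul_field', deriv_const_mul_field, deriv_deriv_affine_rpow_const hv]
  linear_combination (1 + c * x) ^ (p - 2) * hcoef

theorem steady_state_equation
    (b lam eps m chi : ℝ) (hb : 0 < b) (hlam : 0 < lam) (heps : 0 < eps)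
    (hm : 0 ≤ m) (hchi : |1 - m| < chi)
    (U W : ℝ → ℝ)
    (hU : U = fun x =>
      (lam ^ 2 * (chi + 1 - m) ^ 2) / (2 * eps * (chi + m + 1) * b ^ (1 - m)) *
        (1 + (lam * (chi + m - 1) * (chi + 1 - m)) /
          (2 * eps * (chi + m + 1) * b ^ (1 - m)) * x) ^ (-(2 * chi) / (chi + m - 1)))
    (hW : W = fun x =>
      b * (1 + (lam * (chi + m - 1) * (chi + 1 - m)) /
        (2 * eps * (chi + m + 1) * b ^ (1 - m)) * x) ^ (-2 / (chi + m - 1))) :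
    ∀ x : ℝ, 0 ≤ x → eps * deriv (deriv W) x = U x * (W x) ^ m :=
  steady_state_equation_general b lam eps m chi hb hlam heps hchi U W hU hW
end

section
/- Let b, λ, ε > 0, m ≥ 0 and χ > |1-m|, and let U(x) = (λ²(χ+1-m)²)/(2ε(χ+m+1)b^{1-m}) (1 + (λ(χ+m-1)(χ+1-m))/(2ε(χ+m+1)b^{1-m}) x)^{-2χ/(χ+m-1)}. Then ∫₀^∞ U(x) dx = λ. -/
open MeasureTheory

lemma integral_Ioi_comp_add_right (g : ℝ → ℝ) (a c : ℝ) :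
    (∫ x in Set.Ioi a, g (x + c)) = ∫ x in Set.Ioi (a + c), g x := by
  rw [← integral_indicator measurableSet_Ioi, ← integral_indicator measurableSet_Ioi,
    ← integral_add_right_eq_self (Set.indicator (Set.Ioi (a + c)) g) c]
  congr 1
  ext x
  simp [Set.indicator_apply, Set.mem_Ioi]

theorem steady_state_mass
    (b lam eps m chi : ℝ) (hb : 0 < b) (hlam : 0 < lam) (heps : 0 < eps)
    (hm : 0 ≤ m) (hchi : |1 - m| < chi)
    (U : ℝ → ℝ)
    (hU : U = fun x =>
      (lam ^ 2 * (chi + 1 - m) ^ 2) / (2 * eps * (chi + m + 1) * b ^ (1 - m)) *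
        (1 + (lam * (chi + m - 1) * (chi + 1 - m)) /
          (2 * eps * (chi + m + 1) * b ^ (1 - m)) * x) ^ (-(2 * chi) / (chi + m - 1))) :
    ∫ x in Set.Ioi (0 : ℝ), U x = lam := by
  have h1 : 0 < chi + m - 1 := by
    have := abs_lt.mp hchi; linarith [this.1]
  have h2 : 0 < chi + 1 - m := by
    have := abs_lt.mp hchi; linarith [this.2]
  have hchi0 : 0 < chi := lt_of_le_of_lt (abs_nonneg _) hchi
  have hB : 0 < 2 * eps * (chi + m + 1) * b ^ (1 - m) := by
    have h5 : (0:ℝ) < b ^ (1 - m) := Real.rpow_pos_of_pos hb _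
    have h6 : (0:ℝ) < chi + m + 1 := by linarith
    positivity
  set B := 2 * eps * (chi + m + 1) * b ^ (1 - m) with hBdef
  set p : ℝ := -(2 * chi) / (chi + m - 1) with hpdef
  have hp : p < -1 := by
    rw [hpdef, div_lt_iff₀ h1]
    nlinarith
  have hp1 : p + 1 = (m - 1 - chi) / (chi + m - 1) := by
    rw [hpdef]; field_simp; ring
  have hp1ne : p + 1 ≠ 0 := by
    rw [hp1]
    exact div_ne_zero (by linarith) (by linarith)
  set a0 : ℝ := lam * (chi + m - 1) * (chi + 1 - m) / B with ha0def
  have ha0 : 0 < a0 := by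
    apply div_pos _ hB; positivity
  set C : ℝ := lam ^ 2 * (chi + 1 - m) ^ 2 / B with hCdef
  have key : (∫ x in Set.Ioi (0:ℝ), (1 + a0 * x) ^ p) = a0⁻¹ * ((chi + m - 1) / (chi + 1 - m)) := by
    have h3 : (∫ x in Set.Ioi (0:ℝ), (1 + a0 * x) ^ p)
        = ∫ x in Set.Ioi (0:ℝ), (fun y : ℝ => (1 + y) ^ p) (a0 * x) := rfl
    rw [h3, integral_comp_mul_left_Ioi (fun y : ℝ => (1 + y) ^ p) 0 ha0, mul_zero]
    have h4 : (∫ y in Set.Ioi (0:ℝ), (1 + y) ^ p)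
        = ∫ y in Set.Ioi (0:ℝ), (fun u : ℝ => u ^ p) (y + 1) := by
      congr 1; ext y; rw [add_comm]
    rw [h4, integral_Ioi_comp_add_right (fun u : ℝ => u ^ p) 0 1, zero_add,
      integral_Ioi_rpow_of_lt hp one_pos, Real.one_rpow, smul_eq_mul]
    rw [hp1]
    have hne : m - 1 - chi ≠ 0 := by linarith
    field_simp
    ring
  rw [hU]
  simp only [integral_const_mul, key]
  rw [hCdef, ha0def]
  have hBne : B ≠ 0 := ne_of_gt hB
  field_simp
end

section
/- Fix b, λ, ε > 0, m ≥ 0, χ > |1-m|, with U_χ, W_χ as above. Then for every N > 0, W_χ(x) → b uniformly on [0,N] as χ → ∞; i.e. sup_{x∈[0,N]} |W_χ(x) - b| → 0. -/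
open Filter

theorem W_uniform_convergence_chi
    (b lam eps m : ℝ) (hb : 0 < b) (hlam : 0 < lam) (heps : 0 < eps) (hm : 0 ≤ m)
    (W : ℝ → ℝ → ℝ)
    (hW : ∀ chi : ℝ, W chi = fun x =>
      b * (1 + (lam * (chi + m - 1) * (chi + 1 - m)) /
        (2 * eps * (chi + m + 1) * b ^ (1 - m)) * x) ^ (-2 / (chi + m - 1))) :
    ∀ N : ℝ, 0 < N →
      TendstoUniformlyOn (fun chi x => W chi x) (fun _ => b) atTop (Set.Icc 0 N) := by
  intro N hN
  set B : ℝ := b ^ (1 - m) with hB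
  have hB0 : 0 < B := Real.rpow_pos_of_pos hb _
  set A : ℝ := lam / (2 * eps * B) with hA
  have hA0 : 0 < A := by positivity
  set P : ℝ := 1 + A * N with hP
  have hP1 : 1 ≤ P := by nlinarith
  set c : ℝ → ℝ := fun chi =>
    lam * (chi + m - 1) * (chi + 1 - m) / (2 * eps * (chi + m + 1) * B) with hc
  set g : ℝ → ℝ := fun chi => Real.log (1 + c chi * N) * (-2 / (chi + m - 1)) with hg
  -- basic eventual facts
  have hEv : ∀ᶠ chi in atTop, (max (m + 1) (2 - m)) ≤ chi := eventually_ge_atTop _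
  -- key pointwise facts for large chi
  have key : ∀ chi : ℝ, max (m + 1) (2 - m) ≤ chi →
      (1 ≤ chi + m - 1 ∧ 0 ≤ c chi ∧ 1 + c chi * N ≤ P * (chi + m + 1)) := by
    intro chi hchi
    have h1 : m + 1 ≤ chi := le_trans (le_max_left _ _) hchi
    have h2 : 2 - m ≤ chi := le_trans (le_max_right _ _) hchi
    have hs : 1 ≤ chi + m - 1 := by linarith
    have hchi0 : 0 ≤ chi := by linarith
    have hden : 0 < 2 * eps * (chi + m + 1) * B := by positivity
    have hc0 : 0 ≤ c chi := by
      apply div_nonneg _ hden.le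
      have : 0 ≤ chi + 1 - m := by linarith
      have : 0 ≤ chi + m - 1 := by linarith
      positivity
    refine ⟨hs, hc0, ?_⟩
    have hcle : c chi ≤ A * (chi + m + 1) := by
      rw [hc, div_le_iff₀ hden]
      have hEq : A * (chi + m + 1) * (2 * eps * (chi + m + 1) * B) =
          lam * (chi + m + 1) ^ 2 := by
        rw [hA]; field_simp
      rw [hEq]
      nlinarith [sq_nonneg (m - 1), mul_nonneg hchi0 hm]
    have hcN : c chi * N ≤ A * (chi + m + 1) * N :=
      mul_le_mul_of_nonneg_right hcle hN.le
    have h11 : (1 : ℝ) ≤ chi + m + 1 := by linarith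
    calc 1 + c chi * N ≤ (chi + m + 1) + A * N * (chi + m + 1) := by nlinarith
      _ = P * (chi + m + 1) := by rw [hP]; ring
  -- g tends to 0
  have hg0 : Tendsto g atTop (nhds 0) := by
    apply squeeze_zero_norm'
      (a := fun chi => 2 * Real.log P / (chi + m - 1) +
        2 * (Real.log (chi + m + 1) / (chi + m - 1)))
    · filter_upwards [hEv] with chi hchi
      obtain ⟨hs, hc0, hub⟩ := key chi hchi
      have hs0 : 0 < chi + m - 1 := by linarith
      have hu1 : (1 : ℝ) ≤ 1 + c chi * N := by nlinarith
      have hlogu : 0 ≤ Real.log (1 + c chi * N) := Real.log_nonneg hu1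
      have hnorm : ‖g chi‖ = Real.log (1 + c chi * N) * (2 / (chi + m - 1)) := by
        rw [hg]
        rw [Real.norm_eq_abs, abs_mul, abs_of_nonneg hlogu, abs_div, abs_neg]
        rw [abs_of_nonneg hs0.le]
        norm_num
      rw [hnorm]
      have hP0 : (0 : ℝ) < P := lt_of_lt_of_le one_pos hP1
      have hs1 : (0 : ℝ) < chi + m + 1 := by linarith
      have hlog_le : Real.log (1 + c chi * N) ≤ Real.log P + Real.log (chi + m + 1) := by
        rw [← Real.log_mul hP0.ne' hs1.ne']
        exact Real.log_le_log (by linarith) hub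
      have hlogP : 0 ≤ Real.log P := Real.log_nonneg hP1
      have hlogs : 0 ≤ Real.log (chi + m + 1) :=
        Real.log_nonneg (by linarith)
      have h2s : 0 < 2 / (chi + m - 1) := by positivity
      calc Real.log (1 + c chi * N) * (2 / (chi + m - 1))
          ≤ (Real.log P + Real.log (chi + m + 1)) * (2 / (chi + m - 1)) :=
            mul_le_mul_of_nonneg_right hlog_le h2s.le
        _ = 2 * Real.log P / (chi + m - 1) +
            2 * (Real.log (chi + m + 1) / (chi + m - 1)) := by ring
    · have hg1 : Tendsto (fun chi : ℝ => chi + m - 1) atTop atTop :=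
        (tendsto_atTop_add_const_right atTop (m - 1) tendsto_id).congr (fun x => by simp only [id_eq]; ring)
      have t1 : Tendsto (fun chi : ℝ => 2 * Real.log P / (chi + m - 1)) atTop (nhds 0) :=
        Tendsto.div_atTop tendsto_const_nhds hg1
      have t2 : Tendsto (fun chi : ℝ => Real.log (chi + m + 1) / (chi + m - 1))
          atTop (nhds 0) := by
        have h := (Real.tendsto_pow_log_div_mul_add_atTop 1 (-2) 1 one_ne_zero).comp
          (tendsto_atTop_add_const_right atTop (m + 1) tendsto_id)
        have : (fun chi : ℝ => Real.log (chi + m + 1) / (chi + m - 1)) =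
            (fun x : ℝ => Real.log x ^ 1 / (1 * x + -2)) ∘ (fun chi => chi + (m + 1)) := by
          funext chi
          simp only [Function.comp_apply, pow_one]
          ring_nf
        rw [this]
        exact h
      have := t1.add (t2.const_mul 2)
      simpa using this
  -- W_chi(N) lower bound tends to b
  have hTend : Tendsto (fun chi => b * (1 - Real.exp (g chi))) atTop (nhds 0) := by
    have : Tendsto (fun chi => Real.exp (g chi)) atTop (nhds 1) := by
      have := (Real.continuous_exp.tendsto 0).comp hg0
      exact (by simpa using this : Tendsto (Real.exp ∘ g) atTop (nhds 1))
    have hsub : Tendsto (fun chi => (1 : ℝ) - Real.exp (g chi)) atTop (nhds (1 - 1)) :=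
      Tendsto.sub tendsto_const_nhds this
    have hmul := hsub.const_mul b
    simpa using hmul
  rw [Metric.tendstoUniformlyOn_iff]
  intro ε hε
  have hEv2 : ∀ᶠ chi in atTop, dist (b * (1 - Real.exp (g chi))) 0 < ε :=
    Metric.tendsto_nhds.mp hTend ε hε
  filter_upwards [hEv, hEv2] with chi hchi hd
  intro x hx
  obtain ⟨hx0, hxN⟩ := hx
  obtain ⟨hs, hc0, _⟩ := key chi hchi
  have hs0 : 0 < chi + m - 1 := by linarith
  have he : -2 / (chi + m - 1) ≤ 0 := by
    apply div_nonpos_of_nonpos_of_nonneg <;> linarith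
  have hux1 : (1 : ℝ) ≤ 1 + c chi * x := by nlinarith
  have huN1 : (1 : ℝ) ≤ 1 + c chi * N := by nlinarith
  have huxN : 1 + c chi * x ≤ 1 + c chi * N := by nlinarith
  have hWval : W chi x = b * (1 + c chi * x) ^ (-2 / (chi + m - 1)) := by
    rw [hW chi]
  -- upper bound : W ≤ b
  have hupper : W chi x ≤ b := by
    rw [hWval]
    calc b * (1 + c chi * x) ^ (-2 / (chi + m - 1)) ≤ b * 1 :=
          mul_le_mul_of_nonneg_left
            (Real.rpow_le_one_of_one_le_of_nonpos hux1 he) hb.le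
      _ = b := mul_one b
  -- lower bound : b * exp (g chi) ≤ W
  have hlower : b * Real.exp (g chi) ≤ W chi x := by
    rw [hWval]
    have h1 : (1 + c chi * N) ^ (-2 / (chi + m - 1)) ≤
        (1 + c chi * x) ^ (-2 / (chi + m - 1)) :=
      Real.rpow_le_rpow_of_nonpos (by linarith) huxN he
    have h2 : (1 + c chi * N) ^ (-2 / (chi + m - 1)) = Real.exp (g chi) := by
      rw [Real.rpow_def_of_pos (by linarith), hg]
    rw [← h2]
    exact mul_le_mul_of_nonneg_left h1 hb.le
  rw [Real.dist_eq] at hd ⊢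
  rw [sub_zero] at hd
  have habs : |b - W chi x| = b - W chi x := abs_of_nonneg (by linarith)
  rw [habs]
  have hexp : 0 < Real.exp (g chi) := Real.exp_pos _
  calc b - W chi x ≤ b - b * Real.exp (g chi) := by linarith
    _ = b * (1 - Real.exp (g chi)) := by ring
    _ ≤ |b * (1 - Real.exp (g chi))| := le_abs_self _
    _ < ε := hd
end

section
/- Let b, λ, ε > 0, m ≥ 0, χ > |1-m|, and let U, V be given by U(x) = (θ²)/(2β)(1 + θr x/β)^{-χ/r} and V(x) = (θ/β)(1+θrx/β)^{-1}, where θ = λ(χ+1-m), β = ε(χ+m+1)b^{1-m}, r = (χ+m-1)/2. Then (1/U)'' - (χV/U)' = 0 on (0,∞). -/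
/-!
Writing `s = 1 + θ r x / β`, the steady state is `U = K s^(-χ/r)` and `V = (θ/β) s⁻¹`, so
`1/U = K⁻¹ s^(χ/r)` and `(1/U)' = K⁻¹ (θ/β) χ s^(χ/r - 1) = χ V / U`. Hence `(1/U)' - χV/U`
vanishes identically on `(0, ∞)`, and so does its derivative.
-/

open Set Filter Topology

theorem deriv_deriv_eq_deriv_of_hasDerivAt {𝕜 F : Type*} [NontriviallyNormedField 𝕜]
    [NormedAddCommGroup F] [NormedSpace 𝕜 F] {f g : 𝕜 → F} {s : Set 𝕜} {x : 𝕜}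
    (hs : IsOpen s) (hfg : ∀ y ∈ s, HasDerivAt f (g y) y) (hx : x ∈ s) :
    deriv (deriv f) x = deriv g x :=
  Filter.EventuallyEq.deriv_eq <|
    eventually_of_mem (hs.mem_nhds hx) fun y hy => (hfg y hy).deriv

/-- `K` may be `0`: then both sides vanish since `1 / 0 = 0`. -/
theorem hasDerivAt_one_div_mul_rpow_neg {K L a e χ x : ℝ} (hx : 0 < 1 + a * x)
    (hae : a * e = χ * L) :
    HasDerivAt (fun y => 1 / (K * (1 + a * y) ^ (-e)))
      (χ * (L * (1 + a * x) ^ (-1 : ℝ)) / (K * (1 + a * x) ^ (-e))) x := by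
  have hinv : ∀ y, 0 < 1 + a * y → 1 / (K * (1 + a * y) ^ (-e)) = K⁻¹ * (1 + a * y) ^ e := by
    intro y hy
    rw [one_div, mul_inv, Real.rpow_neg hy.le, inv_inv]
  have hnear : (fun y => 1 / (K * (1 + a * y) ^ (-e))) =ᶠ[𝓝 x]
      fun y => K⁻¹ * (1 + a * y) ^ e :=
    eventually_of_mem
      ((isOpen_lt continuous_const (by fun_prop)).mem_nhds (show x ∈ {y | 0 < 1 + a * y} from hx))
      hinv
  have hlin : HasDerivAt (fun y : ℝ => 1 + a * y) a x := by
    simpa using ((hasDerivAt_id x).const_mul a).const_add 1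
  refine (((hlin.rpow_const (p := e) (Or.inl hx.ne')).const_mul K⁻¹).congr_of_eventuallyEq
    hnear).congr_deriv ?_
  rw [Real.rpow_neg_one, div_eq_mul_inv (χ * _), mul_inv, Real.rpow_neg hx.le, inv_inv,
    Real.rpow_sub_one hx.ne']
  linear_combination (K⁻¹ * ((1 + a * x) ^ e / (1 + a * x))) * hae

theorem weight_identity_general
    (b lam eps m chi : ℝ) (hb : 0 < b) (hlam : 0 < lam) (heps : 0 < eps)
    (hchi : |1 - m| < chi)
    (theta beta r : ℝ)
    (htheta : theta = lam * (chi + 1 - m))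
    (hbeta : beta = eps * (chi + m + 1) * b ^ (1 - m))
    (hr : r = (chi + m - 1) / 2)
    (U V : ℝ → ℝ)
    (hU : U = fun x => theta ^ 2 / (2 * beta) * (1 + theta * r * x / beta) ^ (-(chi / r)))
    (hV : V = fun x => theta / beta * (1 + theta * r * x / beta) ^ (-1 : ℝ)) :
    ∀ x ∈ Set.Ioi (0 : ℝ),
      deriv (deriv (fun y => 1 / U y)) x - deriv (fun y => chi * V y / U y) x = 0 := by
  obtain ⟨hchi₁, hchi₂⟩ := abs_lt.mp hchi
  have htheta0 : 0 < theta := by rw [htheta]; nlinarith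
  have hr0 : 0 < r := by rw [hr]; linarith
  have hbeta0 : 0 < beta := by
    rw [hbeta]
    exact mul_pos (mul_pos heps (by linarith)) (Real.rpow_pos_of_pos hb _)
  have hcoeff : theta * r / beta * (chi / r) = chi * (theta / beta) := by field_simp
  have hprofile : ∀ y ∈ Ioi (0 : ℝ), HasDerivAt (fun y => 1 / U y) (chi * V y / U y) y := by
    intro y (hy : 0 < y)
    subst hU hV
    simp only [mul_div_right_comm (theta * r) _ beta]
    exact hasDerivAt_one_div_mul_rpow_neg (by positivity) hcoeff
  intro x hx
  rw [deriv_deriv_eq_deriv_of_hasDerivAt isOpen_Ioi hprofile hx, sub_self]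

theorem weight_identity
    (b lam eps m chi : ℝ) (hb : 0 < b) (hlam : 0 < lam) (heps : 0 < eps)
    (hm : 0 ≤ m) (hchi : |1 - m| < chi)
    (theta beta r : ℝ)
    (htheta : theta = lam * (chi + 1 - m))
    (hbeta : beta = eps * (chi + m + 1) * b ^ (1 - m))
    (hr : r = (chi + m - 1) / 2)
    (U V : ℝ → ℝ)
    (hU : U = fun x => theta ^ 2 / (2 * beta) * (1 + theta * r * x / beta) ^ (-(chi / r)))
    (hV : V = fun x => theta / beta * (1 + theta * r * x / beta) ^ (-1 : ℝ)) :
    ∀ x ∈ Set.Ioi (0 : ℝ),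
      deriv (deriv (fun y => 1 / U y)) x - deriv (fun y => chi * V y / U y) x = 0 :=
  weight_identity_general b lam eps m chi hb hlam heps hchi theta beta r htheta hbeta hr U V hU hV
end

section
/- Let b, λ, ε > 0, m ≥ 1, χ > |1-m|, and let U, V, W be the explicit steady-state profiles with θ = λ(χ+1-m), β = ε(χ+m+1)b^{1-m}, r = (χ+m-1)/2. Then for all x ≥ 0: (ε/2)(W^{1-m})'' + ε(V W^{1-m})' + (1-m)U = ((1-m²+χ(1-3m))/(2(χ+m+1))) U(x), and this quantity is ≤ -(χ/(χ+m+1)) U(x). -/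
open Filter Real Topology

lemma hasDerivAt_aux (A c p y : ℝ) (hy : 0 < 1 + c * y) :
    HasDerivAt (fun z => A * (1 + c * z) ^ p) (A * p * c * (1 + c * y) ^ (p - 1)) y := by
  have h1 : HasDerivAt (fun z : ℝ => 1 + c * z) c y := by
    simpa using ((hasDerivAt_id y).const_mul c).const_add 1
  have h2 := (h1.rpow_const (p := p) (Or.inl (ne_of_gt hy))).const_mul A
  refine h2.congr_deriv ?_
  ring

lemma ev_pos (c x : ℝ) (hx : 0 < 1 + c * x) : ∀ᶠ y in 𝓝 x, 0 < 1 + c * y := by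
  have hcont : Continuous fun y : ℝ => 1 + c * y := by continuity
  exact (hcont.tendsto x).eventually (eventually_gt_nhds hx)

lemma deriv_ev (A c p x : ℝ) (hx : 0 < 1 + c * x) :
    deriv (fun z => A * (1 + c * z) ^ p) =ᶠ[𝓝 x]
      fun z => (A * p * c) * (1 + c * z) ^ (p - 1) :=
  (ev_pos c x hx).mono fun y hy => (hasDerivAt_aux A c p y hy).deriv

lemma deriv2_aux (A c p x : ℝ) (hx : 0 < 1 + c * x) :
    deriv (deriv (fun z => A * (1 + c * z) ^ p)) x
      = A * p * c * (p - 1) * c * (1 + c * x) ^ (p - 2) := by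
  rw [(deriv_ev A c p x hx).deriv_eq]
  have := (hasDerivAt_aux (A * p * c) c (p - 1) x hx).deriv
  rw [this]
  ring_nf

theorem weighted_coefficient_sign
    (b lam eps m chi : ℝ) (hb : 0 < b) (hlam : 0 < lam) (heps : 0 < eps)
    (hm : 1 ≤ m) (hchi : |1 - m| < chi)
    (theta beta r : ℝ)
    (htheta : theta = lam * (chi + 1 - m))
    (hbeta : beta = eps * (chi + m + 1) * b ^ (1 - m))
    (hr : r = (chi + m - 1) / 2)
    (U V W : ℝ → ℝ)
    (hU : U = fun x => theta ^ 2 / (2 * beta) * (1 + theta * r * x / beta) ^ (-(chi / r)))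
    (hW : W = fun x => b * (1 + theta * r * x / beta) ^ (-(1 / r)))
    (hV : V = fun x => theta / beta * (1 + theta * r * x / beta) ^ (-1 : ℝ)) :
    ∀ x : ℝ, 0 ≤ x →
      (eps / 2 * deriv (deriv (fun y => (W y) ^ (1 - m))) x +
          eps * deriv (fun y => V y * (W y) ^ (1 - m)) x + (1 - m) * U x =
        (1 - m ^ 2 + chi * (1 - 3 * m)) / (2 * (chi + m + 1)) * U x) ∧
      (1 - m ^ 2 + chi * (1 - 3 * m)) / (2 * (chi + m + 1)) * U x ≤
        -(chi / (chi + m + 1)) * U x := by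
  intro x hx
  have hchi' : m - 1 < chi := by
    have : |1 - m| = m - 1 := by rw [abs_of_nonpos (by linarith)]; ring
    linarith [this ▸ hchi]
  have hm1 : (0:ℝ) ≤ m - 1 := by linarith
  have hchi0 : 0 < chi := lt_of_le_of_lt hm1 hchi'
  have hB : 0 < b ^ (1 - m) := Real.rpow_pos_of_pos hb _
  have hd : 0 < chi + m + 1 := by linarith
  have hth : 0 < theta := by rw [htheta]; exact mul_pos hlam (by linarith)
  have hbe : 0 < beta := by rw [hbeta]; positivity
  have hr0 : 0 < r := by rw [hr]; linarith
  set c : ℝ := theta * r / beta with hcdef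
  set q : ℝ := (m - 1) / r with hqdef
  have hc0 : 0 < c := by positivity
  have hs : 0 < 1 + c * x := by positivity
  have harg : ∀ y : ℝ, 1 + theta * r * y / beta = 1 + c * y := by
    intro y; rw [hcdef]; ring
  -- eventual equality for W^(1-m)
  have hWg : (fun y => (W y) ^ (1 - m)) =ᶠ[𝓝 x]
      fun y => (b ^ (1 - m)) * (1 + c * y) ^ q := by
    refine (ev_pos c x hs).mono fun y hy => ?_
    rw [hW]
    dsimp only
    rw [harg y, Real.mul_rpow hb.le (Real.rpow_nonneg hy.le _), ← Real.rpow_mul hy.le]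
    congr 1
    rw [hqdef]; field_simp; congr 1; ring
  -- eventual equality for V * W^(1-m)
  have hVWg : (fun y => V y * (W y) ^ (1 - m)) =ᶠ[𝓝 x]
      fun y => (theta / beta * b ^ (1 - m)) * (1 + c * y) ^ (q - 1) := by
    refine (ev_pos c x hs).mono fun y hy => ?_
    have hWy : (W y) ^ (1 - m) = (b ^ (1 - m)) * (1 + c * y) ^ q := by
      rw [hW]
      dsimp only
      rw [harg y, Real.mul_rpow hb.le (Real.rpow_nonneg hy.le _), ← Real.rpow_mul hy.le]
      congr 1
      rw [hqdef]; field_simp; congr 1; ring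
    dsimp only
    rw [hWy, hV]
    dsimp only
    rw [harg y]
    have : (1 + c * y) ^ (-1 : ℝ) * (1 + c * y) ^ q = (1 + c * y) ^ (q - 1) := by
      rw [← Real.rpow_add hy]; congr 1; ring
    calc theta / beta * (1 + c * y) ^ (-1:ℝ) * (b ^ (1-m) * (1 + c * y) ^ q)
        = theta / beta * b ^ (1-m) * ((1 + c * y) ^ (-1:ℝ) * (1 + c * y) ^ q) := by ring
      _ = theta / beta * b ^ (1-m) * (1 + c * y) ^ (q - 1) := by rw [this]
  have hD2 : deriv (deriv (fun y => (W y) ^ (1 - m))) x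
      = (b ^ (1-m)) * q * c * (q - 1) * c * (1 + c * x) ^ (q - 2) := by
    rw [(hWg.deriv).deriv_eq]
    exact deriv2_aux _ c q x hs
  have hD1 : deriv (fun y => V y * (W y) ^ (1 - m)) x
      = (theta / beta * b ^ (1-m)) * (q - 1) * c * (1 + c * x) ^ ((q - 1) - 1) := by
    rw [hVWg.deriv_eq]
    exact (hasDerivAt_aux _ c (q - 1) x hs).deriv
  have hexp : -(chi / r) = q - 2 := by
    rw [hqdef, hr]
    have h2 : chi + m - 1 ≠ 0 := by linarith
    field_simp
    ring
  have hUx : U x = theta ^ 2 / (2 * beta) * (1 + c * x) ^ (q - 2) := by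
    rw [hU]; dsimp only; rw [harg x, hexp]
  constructor
  · rw [hD2, hD1, hUx, hcdef, hqdef]
    have hq1 : (m - 1) / r - 1 - 1 = (m - 1) / r - 2 := by ring
    rw [hq1]
    have hB' : b ^ (1 - m) ≠ 0 := ne_of_gt hB
    have hbe' : beta ≠ 0 := ne_of_gt hbe
    have hr' : r ≠ 0 := ne_of_gt hr0
    have hd' : chi + m + 1 ≠ 0 := ne_of_gt hd
    have heps' : eps = beta / ((chi + m + 1) * b ^ (1 - m)) := by
      rw [hbeta]; field_simp
    rw [heps', hr]
    have h2 : chi + m - 1 ≠ 0 := by linarith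
    field_simp
    ring
  · have hUpos : 0 < U x := by
      rw [hUx]
      have := Real.rpow_pos_of_pos hs (q - 2)
      positivity
    apply mul_le_mul_of_nonneg_right _ hUpos.le
    have h3 : (0:ℝ) ≤ 1 + m + 3 * chi := by linarith
    have hrw : -(chi / (chi + m + 1)) = (-(2 * chi)) / (2 * (chi + m + 1)) := by
      field_simp
    rw [hrw, div_le_div_iff₀ (by linarith) (by linarith)]
    have key : 0 ≤ (m - 1) * (1 + m + 3 * chi) * (chi + m + 1) :=
      mul_nonneg (mul_nonneg hm1 h3) hd.le
    clear hU hW hV hWg hVWg hD1 hD2 hUx harg hexp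
    linarith [key]
end
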